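/- arXiv:2602.12444 — 3 statements merged into one kernel-verified Lean document; each statement's English description precedes it below -/
import Mathlib

section
/- Let Σ ∈ ℝ^{n×n} be a symmetric positive definite matrix, μ ∈ ℝⁿ, z ≥ 0, let E = {x ∈ ℝⁿ : (x − μ)ᵀ Σ⁻¹ (x − μ) ≤ z²} be the confidence ellipsoid, and let a_i ≤ b_i for i = 1, …, n define the box X_box = {x ∈ ℝⁿ : a_i ≤ x_i ≤ b_i for all i}. Then E ⊆ X_box if and only if for every i = 1, …, n one has a_i ≤ μ_i − z√(Σ_{ii}) and μ_i + z√(Σ_{ii}) ≤ b_i. (This is the paper's analytic box-inclusion check, equation (13).) -/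
open Matrix

private lemma dotProduct_mulVec_symm {n : ℕ} {M : Matrix (Fin n) (Fin n) ℝ}
    (hM : M.IsHermitian) (u v : Fin n → ℝ) :
    u ⬝ᵥ M *ᵥ v = v ⬝ᵥ M *ᵥ u := by
  have hMt : Mᵀ = M := by simpa [Matrix.IsSymm] using hM
  rw [Matrix.dotProduct_mulVec, ← Matrix.mulVec_transpose, dotProduct_comm, hMt]

private lemma posSemidef_cauchy {n : ℕ} {M : Matrix (Fin n) (Fin n) ℝ}
    (hM : M.PosSemidef) (u v : Fin n → ℝ) :
    (u ⬝ᵥ M *ᵥ v) ^ 2 ≤ (u ⬝ᵥ M *ᵥ u) * (v ⬝ᵥ M *ᵥ v) := by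
  have key : ∀ t : ℝ, 0 ≤ (v ⬝ᵥ M *ᵥ v) * (t * t) + (2 * (u ⬝ᵥ M *ᵥ v)) * t
      + (u ⬝ᵥ M *ᵥ u) := by
    intro t
    have h0 := hM.dotProduct_mulVec_nonneg (u + t • v)
    have hsymm := dotProduct_mulVec_symm hM.1 v u
    simp only [star_trivial, mulVec_add, mulVec_smul, dotProduct_add, add_dotProduct,
      dotProduct_smul, smul_dotProduct, smul_eq_mul] at h0
    rw [hsymm] at h0
    ring_nf at h0 ⊢
    linarith [h0]
  have hd := discrim_le_zero key
  rw [discrim] at hd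
  nlinarith [hd]

/-- Analytic box-inclusion check: the confidence ellipsoid
`E = {x : (x − μ)ᵀ S⁻¹ (x − μ) ≤ z²}` is contained in the box
`{x : ∀ i, a i ≤ x i ≤ b i}` iff for every `i`,
`a i ≤ μ i − z √(S_ii)` and `μ i + z √(S_ii) ≤ b i`. -/
theorem ellipsoid_box_inclusion {n : ℕ} (S : Matrix (Fin n) (Fin n) ℝ)
    (hS : S.PosDef) (μ : Fin n → ℝ) (z : ℝ) (hz : 0 ≤ z)
    (a b : Fin n → ℝ) (hab : ∀ i, a i ≤ b i) :
    {x : Fin n → ℝ | (x - μ) ⬝ᵥ (S⁻¹ *ᵥ (x - μ)) ≤ z ^ 2} ⊆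
        {x : Fin n → ℝ | ∀ i, a i ≤ x i ∧ x i ≤ b i} ↔
      ∀ i, a i ≤ μ i - z * Real.sqrt (S i i) ∧
        μ i + z * Real.sqrt (S i i) ≤ b i := by
  have hSinv : (S⁻¹).PosDef := hS.inv
  have hdet : IsUnit S.det := isUnit_iff_ne_zero.2 hS.det_pos.ne'
  have hcancel' : ∀ w : Fin n → ℝ, S⁻¹ *ᵥ (S *ᵥ w) = w := by
    intro w
    rw [mulVec_mulVec, nonsing_inv_mul S hdet, one_mulVec]
  have hdiag : ∀ i, 0 < S i i := by
    intro i
    have hne : (Pi.single i 1 : Fin n → ℝ) ≠ 0 := by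
      intro h
      have := congrFun h i
      simp at this
    have := hS.dotProduct_mulVec_pos hne
    simpa [single_dotProduct, mulVec_single] using this
  have hBu : ∀ i, (S *ᵥ Pi.single i 1) ⬝ᵥ S⁻¹ *ᵥ (S *ᵥ Pi.single i 1) = S i i := by
    intro i
    rw [hcancel', dotProduct_single, mulVec_single]
    simp
  constructor
  · -- forward
    intro h i
    have hSi := hdiag i
    have hsq : Real.sqrt (S i i) * Real.sqrt (S i i) = S i i :=
      Real.mul_self_sqrt hSi.le
    have hsp : 0 < Real.sqrt (S i i) := Real.sqrt_pos.2 hSi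
    have hmem : ∀ c : ℝ, c * c * S i i ≤ z ^ 2 →
        (μ + c • (S *ᵥ Pi.single i 1)) ∈
          {x : Fin n → ℝ | (x - μ) ⬝ᵥ (S⁻¹ *ᵥ (x - μ)) ≤ z ^ 2} := by
      intro c hc
      simp only [Set.mem_setOf_eq, add_sub_cancel_left]
      rw [mulVec_smul, smul_dotProduct, dotProduct_smul, smul_eq_mul, smul_eq_mul, hBu i]
      nlinarith [hc]
    set c := z / Real.sqrt (S i i) with hc
    have hcc : c * c * S i i = z ^ 2 := by
      rw [hc]
      field_simp
      rw [Real.sq_sqrt hSi.le]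
    have hx1 := h (hmem c hcc.le)
    have hx2 := h (hmem (-c) (by rw [neg_mul_neg]; exact hcc.le))
    have hcS : c * S i i = z * Real.sqrt (S i i) := by
      rw [hc, div_mul_eq_mul_div, div_eq_iff hsp.ne', mul_assoc, hsq]
    have hxi : (μ + c • (S *ᵥ Pi.single i 1)) i = μ i + z * Real.sqrt (S i i) := by
      simp only [Pi.add_apply, Pi.smul_apply, smul_eq_mul, mulVec_single_one, Matrix.col_apply, mul_one]
      rw [hcS]
    have hxi' : (μ + (-c) • (S *ᵥ Pi.single i 1)) i = μ i - z * Real.sqrt (S i i) := by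
      simp only [Pi.add_apply, Pi.smul_apply, smul_eq_mul, mulVec_single_one, Matrix.col_apply, mul_one]
      rw [neg_mul, hcS]
      ring
    exact ⟨by have := (hx2 i).1; rwa [hxi'] at this,
      by have := (hx1 i).2; rwa [hxi] at this⟩
  · -- backward
    intro h x hx i
    set d := x - μ with hd
    have hBvv : d ⬝ᵥ S⁻¹ *ᵥ d ≤ z ^ 2 := hx
    have hcs := posSemidef_cauchy hSinv.posSemidef (S *ᵥ Pi.single i 1) d
    have huv : (S *ᵥ Pi.single i 1) ⬝ᵥ S⁻¹ *ᵥ d = d i := by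
      rw [dotProduct_mulVec_symm hSinv.1, hcancel', dotProduct_single, mul_one]
    rw [huv, hBu i] at hcs
    have hdi : d i = x i - μ i := by simp [hd]
    have h2 : (z * Real.sqrt (S i i)) ^ 2 = S i i * z ^ 2 := by
      rw [mul_pow, Real.sq_sqrt (hdiag i).le]; ring
    have hbound : (d i) ^ 2 ≤ (z * Real.sqrt (S i i)) ^ 2 := by
      nlinarith [mul_le_mul_of_nonneg_left hBvv (hdiag i).le]
    have hnn : 0 ≤ z * Real.sqrt (S i i) := mul_nonneg hz (Real.sqrt_nonneg _)
    exact ⟨by nlinarith [(h i).1, hbound, hnn, hdi],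
      by nlinarith [(h i).2, hbound, hnn, hdi]⟩
end

section
/- Let l > 0, σ > 0, α ∈ ℝ, and c, μ ∈ ℝ. Then the integral of the squared-exponential kernel section x ↦ α² exp(−(c − x)²/(2 l²)) against the Gaussian measure N(μ, σ²) on ℝ equals α² · (l/√(l² + σ²)) · exp(−(c − μ)²/(2(l² + σ²))). (This is the one-dimensional instance of the paper's analytic mean-prediction integral q_a for GP prediction at uncertain inputs.) -/
open MeasureTheory ProbabilityTheory

/-- Analytic GP mean-prediction integral (1D): the integral of the
squared-exponential kernel section `x ↦ α² exp(−(c − x)²/(2l²))` against the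
Gaussian measure `N(μ, σ²)` equals
`α² (l/√(l² + σ²)) exp(−(c − μ)²/(2(l² + σ²)))`. -/
theorem gp_mean_prediction_integral (l σ α c μ : ℝ) (hl : 0 < l) (hσ : 0 < σ) :
    ∫ x, α ^ 2 * Real.exp (-(c - x) ^ 2 / (2 * l ^ 2))
        ∂(gaussianReal μ ⟨σ ^ 2, sq_nonneg σ⟩)
      = α ^ 2 * (l / Real.sqrt (l ^ 2 + σ ^ 2)) *
          Real.exp (-(c - μ) ^ 2 / (2 * (l ^ 2 + σ ^ 2))) := by
  have hv : (⟨σ ^ 2, sq_nonneg σ⟩ : NNReal) ≠ 0 := by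
    simp [← NNReal.coe_ne_zero, (pow_pos hσ 2).ne']
  have hl2 : (0:ℝ) < l ^ 2 := pow_pos hl 2
  have hσ2 : (0:ℝ) < σ ^ 2 := pow_pos hσ 2
  have hls : (0:ℝ) < l ^ 2 + σ ^ 2 := by positivity
  set A : ℝ := (l ^ 2 + σ ^ 2) / (2 * l ^ 2 * σ ^ 2) with hA
  have hApos : 0 < A := by positivity
  set m : ℝ := (c * σ ^ 2 + μ * l ^ 2) / (l ^ 2 + σ ^ 2) with hm
  rw [gaussianReal_of_var_ne_zero _ hv]
  have hpdf : ∀ x, gaussianPDF μ ⟨σ ^ 2, sq_nonneg σ⟩ x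
      = ((gaussianPDFReal μ ⟨σ ^ 2, sq_nonneg σ⟩ x).toNNReal : ENNReal) := by
    intro x; rfl
  simp only [funext hpdf]
  erw [integral_withDensity_eq_integral_smul
    (measurable_gaussianPDFReal μ _).real_toNNReal]
  have hptwise : ∀ x : ℝ,
      (Real.toNNReal (gaussianPDFReal μ ⟨σ ^ 2, sq_nonneg σ⟩ x)) •
        (α ^ 2 * Real.exp (-(c - x) ^ 2 / (2 * l ^ 2)))
      = (α ^ 2 * (Real.sqrt (2 * Real.pi * σ ^ 2))⁻¹ *
          Real.exp (-(c - μ) ^ 2 / (2 * (l ^ 2 + σ ^ 2)))) *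
          Real.exp (-A * (x - m) ^ 2) := by
    intro x
    have hexp : Real.exp (-(x - μ) ^ 2 / (2 * σ ^ 2)) *
        Real.exp (-(c - x) ^ 2 / (2 * l ^ 2))
        = Real.exp (-(c - μ) ^ 2 / (2 * (l ^ 2 + σ ^ 2))) *
          Real.exp (-A * (x - m) ^ 2) := by
      rw [← Real.exp_add, ← Real.exp_add]
      congr 1
      rw [hA, hm]
      field_simp
      ring
    erw [NNReal.smul_def, Real.coe_toNNReal _ (gaussianPDFReal_nonneg _ _ _),
      gaussianPDFReal]
    simp only [NNReal.coe_mk, smul_eq_mul]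
    erw [NNReal.coe_mk]
    linear_combination (α ^ 2 * (Real.sqrt (2 * Real.pi * σ ^ 2))⁻¹) * hexp
  rw [funext hptwise, integral_const_mul]
  have hshift : ∫ x : ℝ, Real.exp (-A * (x - m) ^ 2)
      = ∫ x : ℝ, Real.exp (-A * x ^ 2) :=
    integral_sub_right_eq_self (fun x => Real.exp (-A * x ^ 2)) m
  rw [hshift, integral_gaussian]
  have h1 : (Real.sqrt (2 * Real.pi * σ ^ 2))⁻¹ * Real.sqrt (Real.pi / A)
      = l / Real.sqrt (l ^ 2 + σ ^ 2) := by
    rw [← Real.sqrt_inv, ← Real.sqrt_mul (by positivity)]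
    rw [show l / Real.sqrt (l ^ 2 + σ ^ 2) = Real.sqrt (l ^ 2) / Real.sqrt (l ^ 2 + σ ^ 2) by
      rw [Real.sqrt_sq hl.le]]
    rw [← Real.sqrt_div (sq_nonneg l)]
    congr 1
    rw [hA]
    have hπ := Real.pi_pos
    field_simp
  rw [← h1]
  ring
end

section
/- Let l₁, l₂ > 0, σ > 0, and a, b, μ ∈ ℝ. Set R = σ²(1/l₁² + 1/l₂²) + 1 and z = (a − μ)/l₁² + (b − μ)/l₂². Then the integral of x ↦ exp(−(a − x)²/(2 l₁²)) · exp(−(b − x)²/(2 l₂²)) against the Gaussian measure N(μ, σ²) on ℝ equals exp(−(a − μ)²/(2 l₁²)) · exp(−(b − μ)²/(2 l₂²)) · (1/√R) · exp(z² σ² / (2R)). (This is the one-dimensional instance of the paper's analytic covariance-prediction integral Q_{ab} for GP prediction at uncertain inputs.) -/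
open MeasureTheory ProbabilityTheory

/-- Analytic GP covariance-prediction integral (1D): with
`R = σ²(1/l₁² + 1/l₂²) + 1` and `z = (a − μ)/l₁² + (b − μ)/l₂²`, the integral of
`x ↦ exp(−(a − x)²/(2l₁²)) exp(−(b − x)²/(2l₂²))` against the Gaussian measure
`N(μ, σ²)` equals
`exp(−(a − μ)²/(2l₁²)) exp(−(b − μ)²/(2l₂²)) (1/√R) exp(z²σ²/(2R))`. -/
theorem gp_covariance_prediction_integral (l₁ l₂ σ a b μ : ℝ)
    (hl₁ : 0 < l₁) (hl₂ : 0 < l₂) (hσ : 0 < σ) :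
    ∫ x, Real.exp (-(a - x) ^ 2 / (2 * l₁ ^ 2)) *
          Real.exp (-(b - x) ^ 2 / (2 * l₂ ^ 2))
        ∂(gaussianReal μ ⟨σ ^ 2, sq_nonneg σ⟩)
      = Real.exp (-(a - μ) ^ 2 / (2 * l₁ ^ 2)) *
          Real.exp (-(b - μ) ^ 2 / (2 * l₂ ^ 2)) *
          (1 / Real.sqrt (σ ^ 2 * (1 / l₁ ^ 2 + 1 / l₂ ^ 2) + 1)) *
          Real.exp (((a - μ) / l₁ ^ 2 + (b - μ) / l₂ ^ 2) ^ 2 * σ ^ 2 /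
            (2 * (σ ^ 2 * (1 / l₁ ^ 2 + 1 / l₂ ^ 2) + 1))) := by
  have hs : (0:ℝ) < σ ^ 2 := by positivity
  have ht₁ : (0:ℝ) < l₁ ^ 2 := by positivity
  have ht₂ : (0:ℝ) < l₂ ^ 2 := by positivity
  have hv : (⟨σ ^ 2, sq_nonneg σ⟩ : NNReal) ≠ 0 := by
    intro h
    have h' : σ ^ 2 = 0 := congrArg NNReal.toReal h
    exact (pow_ne_zero 2 hσ.ne') h'
  set D : ℝ := σ ^ 2 * l₂ ^ 2 + σ ^ 2 * l₁ ^ 2 + l₁ ^ 2 * l₂ ^ 2 with hD_def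
  have hD : 0 < D := by positivity
  set p : ℝ := D / (2 * l₁ ^ 2 * l₂ ^ 2 * σ ^ 2) with hp_def
  set q : ℝ := (a * l₂ ^ 2 * σ ^ 2 + b * l₁ ^ 2 * σ ^ 2 + μ * l₁ ^ 2 * l₂ ^ 2) / D
    with hq_def
  have hp : 0 < p := by positivity
  set R : ℝ := σ ^ 2 * (1 / l₁ ^ 2 + 1 / l₂ ^ 2) + 1 with hR_def
  have hR : 0 < R := by positivity
  have hRps : R = 2 * p * σ ^ 2 := by
    rw [hR_def, hp_def, hD_def]
    field_simp
  set z : ℝ := (a - μ) / l₁ ^ 2 + (b - μ) / l₂ ^ 2 with hz_def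
  set K : ℝ := -(a - μ) ^ 2 / (2 * l₁ ^ 2) + -(b - μ) ^ 2 / (2 * l₂ ^ 2)
      + z ^ 2 * σ ^ 2 / (2 * R) with hK_def
  have hE : ∀ x : ℝ, -(x - μ) ^ 2 / (2 * σ ^ 2) +
      (-(a - x) ^ 2 / (2 * l₁ ^ 2) + -(b - x) ^ 2 / (2 * l₂ ^ 2))
      = K + -p * (x - q) ^ 2 := by
    intro x
    rw [hK_def, hz_def, hq_def, hp_def, hR_def, hD_def]
    field_simp
    ring
  rw [gaussianReal_of_var_ne_zero _ hv]
  have hpdf : gaussianPDF μ ⟨σ ^ 2, sq_nonneg σ⟩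
      = fun x => ((gaussianPDFReal μ (⟨σ ^ 2, sq_nonneg σ⟩ : NNReal) x).toNNReal : ENNReal) := rfl
  rw [hpdf, integral_withDensity_eq_integral_smul
    ((measurable_gaussianPDFReal μ (⟨σ ^ 2, sq_nonneg σ⟩ : NNReal)).real_toNNReal) _]
  have key : (fun x => (gaussianPDFReal μ (⟨σ ^ 2, sq_nonneg σ⟩ : NNReal) x).toNNReal •
        (Real.exp (-(a - x) ^ 2 / (2 * l₁ ^ 2)) * Real.exp (-(b - x) ^ 2 / (2 * l₂ ^ 2))))
      = fun x => ((Real.sqrt (2 * (Real.pi * σ ^ 2)))⁻¹ * Real.exp K) *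
        Real.exp (-p * (x - q) ^ 2) := by
    funext x
    rw [NNReal.smul_def]
    erw [Real.coe_toNNReal _ (gaussianPDFReal_nonneg _ _ _),
      gaussianPDFReal]
    erw [NNReal.coe_mk]
    simp only [smul_eq_mul]
    rw [mul_assoc, mul_assoc, ← Real.exp_add, ← Real.exp_add, hE x, Real.exp_add]
    ring
  rw [key, MeasureTheory.integral_const_mul]
  have hint : ∫ x : ℝ, Real.exp (-p * (x - q) ^ 2) = Real.sqrt (Real.pi / p) := by
    rw [show (fun x : ℝ => Real.exp (-p * (x - q) ^ 2))
        = fun x : ℝ => (fun y : ℝ => Real.exp (-p * y ^ 2)) (x - q) from rfl,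
      integral_sub_right_eq_self (fun y : ℝ => Real.exp (-p * y ^ 2)) q,
      integral_gaussian]
  rw [hint]
  have hconst : (Real.sqrt (2 * (Real.pi * σ ^ 2)))⁻¹ * Real.sqrt (Real.pi / p)
      = 1 / Real.sqrt R := by
    rw [← Real.sqrt_inv, ← Real.sqrt_mul (by positivity), one_div, ← Real.sqrt_inv]
    congr 1
    rw [hRps]
    have hπ := Real.pi_pos
    field_simp
  rw [hK_def, Real.exp_add, Real.exp_add, ← hconst]
  ring
end
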